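/- If t_II = kπ√(L1C1) for some positive integer k, then for every ε ≥ 0 and every t_I > 0 the matrix M_ε = e^{A_I ε} e^{A_II t_II} e^{A_I t_I} has spectral radius exactly 1; indeed (−1)^k is an eigenvalue of M_ε with eigenvector e1. -/

import Mathlib

/-!
`A_I` annihilates `e1`, and on `span {e1, e3}` the matrix `A_II` acts as a harmonic oscillator
of angular frequency `1 / √(L1 C1)`, so `exp (t_II A_II)` maps `e1` to `cos (kπ) e1 = (-1)^k e1`.
For the stored energy `E x = L1 x₀² + L2 x₁² + C1 x₂² + C2 x₃²` both modes satisfy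
`dE/dt = -2 x₃² / R ≤ 0`, so each factor of `M_ε`, hence `M_ε` itself, does not increase `E`.
Splitting a complex eigenvector into real and imaginary parts then bounds every eigenvalue by `1`.
-/

open Matrix

namespace Matrix

variable {n : Type*} [Fintype n] [DecidableEq n]

theorem mem_spectrum_iff_exists_mulVec_eq_smul {K : Type*} [Field K] {A : Matrix n n K} {μ : K} :
    μ ∈ spectrum K A ↔ ∃ v ≠ 0, A *ᵥ v = μ • v := by
  rw [← spectrum_toLin', ← Module.End.hasEigenvalue_iff_mem_spectrum]
  constructor
  · intro h
    obtain ⟨v, hv⟩ := h.exists_hasEigenvector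
    exact ⟨v, hv.2, hv.apply_eq_smul⟩
  · rintro ⟨v, hv0, hv⟩
    exact Module.End.hasEigenvalue_of_hasEigenvector ⟨Module.End.mem_eigenspace_iff.mpr hv, hv0⟩

theorem mem_spectrum_map_ofReal_of_mulVec_eq_smul {M : Matrix n n ℝ} {v : n → ℝ} {μ : ℝ}
    (hv0 : v ≠ 0) (hv : M *ᵥ v = μ • v) : (μ : ℂ) ∈ spectrum ℂ (M.map Complex.ofReal) := by
  refine mem_spectrum_iff_exists_mulVec_eq_smul.mpr
    ⟨Complex.ofReal ∘ v, fun h => hv0 (funext fun i => by simpa using congrFun h i), ?_⟩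
  funext i
  simpa [mulVec, dotProduct] using congrArg Complex.ofReal (congrFun hv i)

theorem diagonal_mul_half_smul_inv_mul {K : Type*} [Field K] [NeZero (2 : K)] {d : n → K}
    (hd : ∀ i, d i ≠ 0) (B : Matrix n n K) :
    diagonal d * ((1 / 2 : K) • (((1 / 2 : K) • diagonal d)⁻¹ * B)) = B := by
  set P := (1 / 2 : K) • diagonal d
  have hP : IsUnit P.det :=
    isUnit_iff_ne_zero.mpr (by simp [P, Finset.prod_ne_zero_iff, hd, two_ne_zero])
  have hdP : diagonal d = (2 : K) • P := by
    rw [smul_smul, one_div, mul_inv_cancel₀ two_ne_zero, one_smul]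
  rw [hdP, smul_mul_smul_comm, ← Matrix.mul_assoc, mul_nonsing_inv P hP, Matrix.one_mul, one_div,
    mul_inv_cancel₀ two_ne_zero, one_smul]

theorem mulVec_eq_div_of_diagonal_mul_eq {K : Type*} [Field K] {d : n → K} (hd : ∀ i, d i ≠ 0)
    {A B : Matrix n n K} (h : diagonal d * A = B) (v : n → K) :
    A *ᵥ v = fun i => (B *ᵥ v) i / d i := by
  funext i
  rw [← h, ← mulVec_mulVec, mulVec_diagonal, mul_div_cancel_left₀ _ (hd i)]

section Exp

attribute [local instance] Matrix.linftyOpNormedAddCommGroup Matrix.linftyOpNormedRing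
  Matrix.linftyOpNormedAlgebra

theorem hasSum_exp_mulVec (B : Matrix n n ℝ) (v : n → ℝ) :
    HasSum (fun k : ℕ => (k.factorial : ℝ)⁻¹ • (B ^ k *ᵥ v)) (NormedSpace.exp B *ᵥ v) := by
  have h := (LinearMap.toContinuousLinearMap ((mulVecBilin ℝ ℝ).flip v)).hasSum
    (NormedSpace.exp_series_hasSum_exp' (𝕂 := ℝ) B)
  simp only [LinearMap.coe_toContinuousLinearMap', LinearMap.flip_apply,
    mulVecBilin_apply, smul_mulVec] at h
  exact h

theorem hasDerivAt_exp_smul_mulVec (A : Matrix n n ℝ) (x : n → ℝ) (s : ℝ) :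
    HasDerivAt (fun r : ℝ => NormedSpace.exp (r • A) *ᵥ x)
      (A *ᵥ (NormedSpace.exp (s • A) *ᵥ x)) s := by
  rw [mulVec_mulVec]
  exact (LinearMap.toContinuousLinearMap ((mulVecBilin ℝ ℝ).flip x)).hasFDerivAt.comp_hasDerivAt s
    (hasDerivAt_exp_smul_const' A s)

theorem exp_mulVec_eq_self_of_mulVec_eq_zero {B : Matrix n n ℝ} {v : n → ℝ} (h : B *ᵥ v = 0) :
    NormedSpace.exp B *ᵥ v = v := by
  refine (hasSum_exp_mulVec B v).unique ?_
  convert hasSum_single (f := fun k : ℕ => (k.factorial : ℝ)⁻¹ • (B ^ k *ᵥ v)) 0 fun k hk => ?_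
  · simp
  · obtain ⟨m, rfl⟩ := Nat.exists_eq_succ_of_ne_zero hk
    simp [pow_succ, ← mulVec_mulVec, h]

theorem pow_mulVec_of_mulVec_eq_of_mulVec_eq_smul {R : Type*} [CommRing R] {B : Matrix n n R}
    {v w : n → R} {c : R} (hv : B *ᵥ v = w) (hw : B *ᵥ w = c • v) (m : ℕ) :
    B ^ (2 * m) *ᵥ v = c ^ m • v ∧ B ^ (2 * m + 1) *ᵥ v = c ^ m • w := by
  have hodd (m : ℕ) (heven : B ^ (2 * m) *ᵥ v = c ^ m • v) :
      B ^ (2 * m + 1) *ᵥ v = c ^ m • w := by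
    rw [pow_succ', ← mulVec_mulVec, heven, mulVec_smul, hv]
  induction m with
  | zero => simp [hv]
  | succ m ih =>
    have heven : B ^ (2 * (m + 1)) *ᵥ v = c ^ (m + 1) • v := by
      rw [show 2 * (m + 1) = 2 * m + 1 + 1 by ring, pow_succ', ← mulVec_mulVec, ih.2, mulVec_smul,
        hw, smul_smul, pow_succ]
    exact ⟨heven, hodd _ heven⟩

theorem exp_mulVec_of_mulVec_eq_of_mulVec_eq_neg_sq_smul {B : Matrix n n ℝ} {v w : n → ℝ} {θ : ℝ}
    (hθ : θ ≠ 0) (hv : B *ᵥ v = w) (hw : B *ᵥ w = -θ ^ 2 • v) :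
    NormedSpace.exp B *ᵥ v = Real.cos θ • v + (Real.sin θ / θ) • w := by
  have hpow := pow_mulVec_of_mulVec_eq_of_mulVec_eq_smul hv hw
  have hcos : HasSum (fun m : ℕ => ((2 * m).factorial : ℝ)⁻¹ • (B ^ (2 * m) *ᵥ v))
      (Real.cos θ • v) := by
    refine ((Real.hasSum_cos θ).smul_const v).congr_fun fun m => ?_
    rw [(hpow m).1, smul_smul, neg_pow, ← pow_mul]
    congr 1
    field_simp
  have hsin : HasSum (fun m : ℕ => ((2 * m + 1).factorial : ℝ)⁻¹ • (B ^ (2 * m + 1) *ᵥ v))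
      ((Real.sin θ / θ) • w) := by
    refine (((Real.hasSum_sin θ).div_const θ).smul_const w).congr_fun fun m => ?_
    rw [(hpow m).2, smul_smul, neg_pow, ← pow_mul, pow_succ]
    congr 1
    field_simp
  exact (hasSum_exp_mulVec B v).unique (hcos.even_add_odd hsin)

end Exp

end Matrix

section WeightedEnergy

variable {n : Type*} [Fintype n]

def weightedEnergy (p x : n → ℝ) : ℝ := ∑ i, p i * x i ^ 2

variable {p : n → ℝ}

theorem weightedEnergy_nonneg (hp : ∀ i, 0 ≤ p i) (x : n → ℝ) : 0 ≤ weightedEnergy p x :=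
  Finset.sum_nonneg fun i _ => mul_nonneg (hp i) (sq_nonneg _)

theorem weightedEnergy_pos (hp : ∀ i, 0 < p i) {x : n → ℝ} (hx : x ≠ 0) :
    0 < weightedEnergy p x := by
  obtain ⟨i, hi⟩ := Function.ne_iff.mp hx
  exact Finset.sum_pos' (fun j _ => mul_nonneg (hp j).le (sq_nonneg _))
    ⟨i, Finset.mem_univ i, mul_pos (hp i) (sq_pos_of_ne_zero hi)⟩

theorem weightedEnergy_rotate (r s : ℝ) (a b : n → ℝ) :
    weightedEnergy p (r • a - s • b) + weightedEnergy p (s • a + r • b) =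
      (r ^ 2 + s ^ 2) * (weightedEnergy p a + weightedEnergy p b) := by
  simp only [weightedEnergy, ← Finset.sum_add_distrib, Finset.mul_sum]
  refine Finset.sum_congr rfl fun i _ => ?_
  simp only [Pi.sub_apply, Pi.add_apply, Pi.smul_apply, smul_eq_mul]
  ring

section

variable [DecidableEq n]

theorem weightedEnergy_exp_smul_mulVec_le {A : Matrix n n ℝ}
    (hA : ∀ u, u ⬝ᵥ (diagonal p * A) *ᵥ u ≤ 0) {t : ℝ} (ht : 0 ≤ t) (x : n → ℝ) :
    weightedEnergy p (NormedSpace.exp (t • A) *ᵥ x) ≤ weightedEnergy p x := by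
  set u := fun s : ℝ => NormedSpace.exp (s • A) *ᵥ x
  have hderiv (s : ℝ) : HasDerivAt (fun s => weightedEnergy p (u s))
      (2 * (u s ⬝ᵥ (diagonal p * A) *ᵥ u s)) s := by
    have hu := hasDerivAt_pi.1 (hasDerivAt_exp_smul_mulVec A x s)
    refine (HasDerivAt.fun_sum (u := Finset.univ) fun i _ =>
      ((hu i).fun_pow 2).const_mul (p i)).congr_deriv ?_
    simp only [← mulVec_mulVec, dotProduct, mulVec_diagonal, Finset.mul_sum]
    refine Finset.sum_congr rfl fun i _ => ?_
    simp only [u]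
    ring
  have hanti : Antitone fun s => weightedEnergy p (u s) :=
    antitone_of_deriv_nonpos (fun s => (hderiv s).differentiableAt) fun s => by
      rw [(hderiv s).deriv]
      linarith [hA (u s)]
  simpa [u] using hanti ht

theorem norm_le_one_of_mem_spectrum_map_ofReal (hp : ∀ i, 0 < p i) {M : Matrix n n ℝ}
    (hM : ∀ y, weightedEnergy p (M *ᵥ y) ≤ weightedEnergy p y) {z : ℂ}
    (hz : z ∈ spectrum ℂ (M.map Complex.ofReal)) : ‖z‖ ≤ 1 := by
  obtain ⟨v, hv0, hv⟩ := mem_spectrum_iff_exists_mulVec_eq_smul.mp hz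
  set a : n → ℝ := fun i => (v i).re
  set b : n → ℝ := fun i => (v i).im
  have hcomp (i : n) : (M *ᵥ a) i = (z.re • a - z.im • b) i ∧
      (M *ᵥ b) i = (z.im • a + z.re • b) i := by
    have h := Complex.ext_iff.mp (congrFun hv i)
    simp only [mulVec, dotProduct, map_apply, Pi.smul_apply, smul_eq_mul, Complex.re_sum,
      Complex.im_sum, Complex.mul_re, Complex.mul_im, Complex.ofReal_re, Complex.ofReal_im,
      zero_mul, sub_zero, add_zero] at h
    simp only [mulVec, dotProduct, Pi.sub_apply, Pi.add_apply, Pi.smul_apply, smul_eq_mul, a, b]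
    constructor <;> linarith [h.1, h.2]
  have hMa : M *ᵥ a = z.re • a - z.im • b := funext fun i => (hcomp i).1
  have hMb : M *ᵥ b = z.im • a + z.re • b := funext fun i => (hcomp i).2
  have hpos : 0 < weightedEnergy p a + weightedEnergy p b := by
    have hab : a ≠ 0 ∨ b ≠ 0 := by
      by_contra! h
      exact hv0 (funext fun i => Complex.ext (congrFun h.1 i) (congrFun h.2 i))
    rcases hab with ha | hb
    · exact add_pos_of_pos_of_nonneg (weightedEnergy_pos hp ha)
        (weightedEnergy_nonneg (fun i => (hp i).le) b)
    · exact add_pos_of_nonneg_of_pos (weightedEnergy_nonneg (fun i => (hp i).le) a)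
        (weightedEnergy_pos hp hb)
  have hsq : ‖z‖ ^ 2 ≤ 1 := by
    have hrot := weightedEnergy_rotate (p := p) z.re z.im a b
    rw [← hMa, ← hMb] at hrot
    have : ‖z‖ ^ 2 = z.re ^ 2 + z.im ^ 2 := by
      rw [Complex.sq_norm, Complex.normSq_apply]
      ring
    rw [this]
    nlinarith [hM a, hM b]
  nlinarith [norm_nonneg z]

end

end WeightedEnergy

section SemiQuasiZSource

noncomputable def modeIq (R : ℝ) : Matrix (Fin 4) (Fin 4) ℝ :=
  !![0,0,0,0; 0,0,1,1; 0,-1,0,0; 0,-1,0,-1/R]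

noncomputable def modeIIq (R : ℝ) : Matrix (Fin 4) (Fin 4) ℝ :=
  !![0,0,-1,0; 0,0,0,1; 1,0,0,0; 0,-1,0,-1/R]

variable {R : ℝ}

theorem dotProduct_modeIq_mulVec_nonpos (hR : 0 ≤ R) (u : Fin 4 → ℝ) :
    u ⬝ᵥ modeIq R *ᵥ u ≤ 0 := by
  have h : u ⬝ᵥ modeIq R *ᵥ u = -(u 3 ^ 2 / R) := by
    simp [modeIq, dotProduct, Fin.sum_univ_four]
    ring
  rw [h]
  exact neg_nonpos.mpr (by positivity)

theorem dotProduct_modeIIq_mulVec_nonpos (hR : 0 ≤ R) (u : Fin 4 → ℝ) :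
    u ⬝ᵥ modeIIq R *ᵥ u ≤ 0 := by
  have h : u ⬝ᵥ modeIIq R *ᵥ u = -(u 3 ^ 2 / R) := by
    simp [modeIIq, dotProduct, Fin.sum_univ_four]
    ring
  rw [h]
  exact neg_nonpos.mpr (by positivity)

variable {L1 L2 C1 C2 : ℝ} {A : Matrix (Fin 4) (Fin 4) ℝ}

theorem exp_smul_mulVec_e1_of_modeIq (hd : ∀ i, ![L1, L2, C1, C2] i ≠ 0)
    (hA : diagonal ![L1, L2, C1, C2] * A = modeIq R) (s : ℝ) :
    NormedSpace.exp (s • A) *ᵥ ![1, 0, 0, 0] = ![1, 0, 0, 0] := by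
  have hAe1 : A *ᵥ ![1, 0, 0, 0] = 0 := by
    rw [mulVec_eq_div_of_diagonal_mul_eq hd hA]
    ext i
    fin_cases i <;> simp [modeIq]
  exact exp_mulVec_eq_self_of_mulVec_eq_zero (by rw [smul_mulVec, hAe1, smul_zero])

theorem exp_smul_mulVec_e1_of_modeIIq (hd : ∀ i, ![L1, L2, C1, C2] i ≠ 0) (hLC : 0 < L1 * C1)
    (hA : diagonal ![L1, L2, C1, C2] * A = modeIIq R) {k : ℕ} (hk : k ≠ 0) :
    NormedSpace.exp ((k * Real.pi * √(L1 * C1)) • A) *ᵥ ![1, 0, 0, 0] =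
      (-1 : ℝ) ^ k • ![1, 0, 0, 0] := by
  have hAe1 : A *ᵥ ![1, 0, 0, 0] = C1⁻¹ • ![0, 0, 1, 0] := by
    rw [mulVec_eq_div_of_diagonal_mul_eq hd hA]
    ext i
    fin_cases i <;> simp [modeIIq, div_eq_inv_mul]
  have hAe3 : A *ᵥ ![0, 0, 1, 0] = -L1⁻¹ • ![1, 0, 0, 0] := by
    rw [mulVec_eq_div_of_diagonal_mul_eq hd hA]
    ext i
    fin_cases i <;> simp [modeIIq, div_eq_inv_mul]
  have hθ : (k * Real.pi : ℝ) ≠ 0 := by positivity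
  have hfreq : (k * Real.pi * √(L1 * C1)) ^ 2 * (C1⁻¹ * L1⁻¹) = (k * Real.pi) ^ 2 := by
    rw [mul_pow, Real.sq_sqrt hLC.le, mul_assoc, ← mul_inv, mul_comm C1, mul_inv_cancel₀ hLC.ne',
      mul_one]
  set B := (k * Real.pi * √(L1 * C1)) • A
  have hB : B *ᵥ (B *ᵥ ![1, 0, 0, 0]) = -(k * Real.pi) ^ 2 • ![1, 0, 0, 0] := by
    rw [smul_mulVec, smul_mulVec, mulVec_smul, hAe1, mulVec_smul, hAe3, smul_smul, smul_smul,
      smul_smul, ← hfreq]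
    congr 1
    ring
  rw [exp_mulVec_of_mulVec_eq_of_mulVec_eq_neg_sq_smul hθ rfl hB, Real.sin_nat_mul_pi,
    Real.cos_nat_mul_pi, zero_div, zero_smul, add_zero]

end SemiQuasiZSource

/-- if t_II = kπ√(L1C1) with k a positive integer, then M_ε has spectral
radius exactly 1 for every ε ≥ 0 and t_I > 0; indeed (-1)^k is an eigenvalue with
eigenvector e1. -/
theorem Meps_spectral_radius_one
    (L1 L2 C1 C2 R : ℝ) (hL1 : 0 < L1) (hL2 : 0 < L2) (hC1 : 0 < C1)
    (hC2 : 0 < C2) (hR : 0 < R)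
    (P : Matrix (Fin 4) (Fin 4) ℝ) (hP : P = (1/2 : ℝ) • Matrix.diagonal ![L1, L2, C1, C2])
    (AIq AIIq : Matrix (Fin 4) (Fin 4) ℝ)
    (hAIq : AIq = !![0,0,0,0; 0,0,1,1; 0,-1,0,0; 0,-1,0,-1/R])
    (hAIIq : AIIq = !![0,0,-1,0; 0,0,0,1; 1,0,0,0; 0,-1,0,-1/R])
    (AI AII : Matrix (Fin 4) (Fin 4) ℝ)
    (hAI : AI = (1/2 : ℝ) • (P⁻¹ * AIq)) (hAII : AII = (1/2 : ℝ) • (P⁻¹ * AIIq))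
    (k : ℕ) (hk : 0 < k)
    (tI tII ε : ℝ) (htI : 0 < tI) (hε : 0 ≤ ε)
    (htII : tII = k * Real.pi * Real.sqrt (L1 * C1))
    (Mε : Matrix (Fin 4) (Fin 4) ℝ)
    (hMε : Mε = NormedSpace.exp (ε • AI) * NormedSpace.exp (tII • AII) *
                NormedSpace.exp (tI • AI))
    (e1 : Fin 4 → ℝ) (he1 : e1 = ![1,0,0,0]) :
    Mε *ᵥ e1 = ((-1 : ℝ) ^ k) • e1 ∧
    (((-1 : ℂ) ^ k) ∈ spectrum ℂ (Mε.map Complex.ofReal)) ∧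
    (∀ z ∈ spectrum ℂ (Mε.map Complex.ofReal), ‖z‖ ≤ 1) := by
  set p : Fin 4 → ℝ := ![L1, L2, C1, C2]
  have hp : ∀ i, 0 < p i := by
    intro i
    fin_cases i <;> assumption
  have hpd : ∀ i, p i ≠ 0 := fun i => (hp i).ne'
  have hpI : diagonal p * AI = modeIq R := by
    rw [hAI, hP, hAIq]
    exact diagonal_mul_half_smul_inv_mul hpd _
  have hpII : diagonal p * AII = modeIIq R := by
    rw [hAII, hP, hAIIq]
    exact diagonal_mul_half_smul_inv_mul hpd _
  have heig : Mε *ᵥ e1 = (-1 : ℝ) ^ k • e1 := by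
    rw [hMε, he1, htII, ← mulVec_mulVec, ← mulVec_mulVec, exp_smul_mulVec_e1_of_modeIq hpd hpI,
      exp_smul_mulVec_e1_of_modeIIq hpd (mul_pos hL1 hC1) hpII hk.ne', mulVec_smul,
      exp_smul_mulVec_e1_of_modeIq hpd hpI]
  have hdissI : ∀ u, u ⬝ᵥ (diagonal p * AI) *ᵥ u ≤ 0 :=
    hpI ▸ dotProduct_modeIq_mulVec_nonpos hR.le
  have hdissII : ∀ u, u ⬝ᵥ (diagonal p * AII) *ᵥ u ≤ 0 :=
    hpII ▸ dotProduct_modeIIq_mulVec_nonpos hR.le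
  have hcontr (y : Fin 4 → ℝ) : weightedEnergy p (Mε *ᵥ y) ≤ weightedEnergy p y := by
    rw [hMε, ← mulVec_mulVec, ← mulVec_mulVec]
    exact (weightedEnergy_exp_smul_mulVec_le hdissI hε _).trans <|
      (weightedEnergy_exp_smul_mulVec_le hdissII (by rw [htII]; positivity) _).trans
      (weightedEnergy_exp_smul_mulVec_le hdissI htI.le _)
  refine ⟨heig, ?_, fun z hz => norm_le_one_of_mem_spectrum_map_ofReal hp hcontr hz⟩
  have he1_ne : e1 ≠ 0 := he1 ▸ fun h => one_ne_zero (congrFun h 0)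
  simpa using mem_spectrum_map_ofReal_of_mulVec_eq_smul he1_ne heig
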